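/- Let (x*,y*) be a stationary point with dual solution (ρ*,w*,z*), and set λ* = (w*−x*)ᵀRz* and μ* = w*ᵀC(z*−y*). If ρ* ∈ (0,1), then λ* ∈ [0,1] and μ* ∈ [0,1]. If ρ* ∈ {0,1}, then (x*,y*) is a Nash equilibrium. -/

import Mathlib

open scoped BigOperators Classical
open Matrix Filter

noncomputable section

namespace TS

/-- The probability simplex in `ℝ^k`. -/
def Δ (k : ℕ) : Set (Fin k → ℝ) := {x | (∀ i, 0 ≤ x i) ∧ ∑ i, x i = 1}

/-- Maximum entry of a vector. -/
def vmax {k : ℕ} (u : Fin k → ℝ) : ℝ := ⨆ i, u i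

/-- Maximum entry of a vector over an index set. -/
def vmaxOn {k : ℕ} (S : Set (Fin k)) (u : Fin k → ℝ) : ℝ := ⨆ i ∈ S, u i

/-- The support of a vector: indices with positive entries. -/
def supp {k : ℕ} (u : Fin k → ℝ) : Set (Fin k) := {i | 0 < u i}

/-- The set of indices where `u` attains its maximum entry. -/
def suppmax {k : ℕ} (u : Fin k → ℝ) : Set (Fin k) := {i | ∀ j, u j ≤ u i}

/-- The set of indices where `u` attains its minimum entry. -/
def suppmin {k : ℕ} (u : Fin k → ℝ) : Set (Fin k) := {i | ∀ j, u i ≤ u j}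

variable {m n : ℕ}

/-- `f_R(x,y) = max(Ry) − xᵀRy`. -/
def fR (R : Matrix (Fin m) (Fin n) ℝ) (x : Fin m → ℝ) (y : Fin n → ℝ) : ℝ :=
  vmax (R.mulVec y) - x ⬝ᵥ R.mulVec y

/-- `f_C(x,y) = max(Cᵀx) − xᵀCy`. -/
def fC (C : Matrix (Fin m) (Fin n) ℝ) (x : Fin m → ℝ) (y : Fin n → ℝ) : ℝ :=
  vmax (Matrix.vecMul x C) - x ⬝ᵥ C.mulVec y

/-- `f(x,y) = max{f_R(x,y), f_C(x,y)}`. -/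
def fNE (R C : Matrix (Fin m) (Fin n) ℝ) (x : Fin m → ℝ) (y : Fin n → ℝ) : ℝ :=
  max (fR R x y) (fC C x y)

/-- `S_R(y) = suppmax(Ry)`. -/
def SR (R : Matrix (Fin m) (Fin n) ℝ) (y : Fin n → ℝ) : Set (Fin m) := suppmax (R.mulVec y)

/-- `S_C(x) = suppmax(Cᵀx)`. -/
def SC (C : Matrix (Fin m) (Fin n) ℝ) (x : Fin m → ℝ) : Set (Fin n) := suppmax (Matrix.vecMul x C)

/-- `g` has right (one-sided) derivative `d` at `0`: `lim_{θ→0⁺} (g θ − g 0)/θ = d`. -/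
def HasPosDeriv (g : ℝ → ℝ) (d : ℝ) : Prop :=
  Tendsto (fun θ : ℝ => (g θ - g 0) / θ) (nhdsWithin 0 (Set.Ioi 0)) (nhds d)

/-- `(x,y)` is a stationary point: for every `(x',y')` in the product simplex, the scaled
directional derivative `Df(x,y,x',y')` of `f` exists and is nonnegative. -/
def IsStationary (R C : Matrix (Fin m) (Fin n) ℝ) (x : Fin m → ℝ) (y : Fin n → ℝ) : Prop :=
  ∀ x' ∈ Δ m, ∀ y' ∈ Δ n, ∃ d : ℝ,
    HasPosDeriv (fun θ : ℝ => fNE R C (x + θ • (x' - x)) (y + θ • (y' - y))) d ∧ 0 ≤ d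

/-- The function `T(x,y,x',y',ρ,w,z)`. -/
def Tfun (R C : Matrix (Fin m) (Fin n) ℝ) (x : Fin m → ℝ) (y : Fin n → ℝ)
    (x' : Fin m → ℝ) (y' : Fin n → ℝ) (ρ : ℝ) (w : Fin m → ℝ) (z : Fin n → ℝ) : ℝ :=
  ρ * (w ⬝ᵥ R.mulVec y' - x ⬝ᵥ R.mulVec y' - x' ⬝ᵥ R.mulVec y + x ⬝ᵥ R.mulVec y)
    + (1 - ρ) * (x' ⬝ᵥ C.mulVec z - x ⬝ᵥ C.mulVec y' - x' ⬝ᵥ C.mulVec y + x ⬝ᵥ C.mulVec y)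

/-- Feasibility for the tuple `(ρ,w,z)`: `ρ ∈ [0,1]`, `w ∈ Δ_m` with `supp w ⊆ S_R(y)`,
`z ∈ Δ_n` with `supp z ⊆ S_C(x)`. -/
def dualFeasible (R C : Matrix (Fin m) (Fin n) ℝ) (x : Fin m → ℝ) (y : Fin n → ℝ)
    (ρ : ℝ) (w : Fin m → ℝ) (z : Fin n → ℝ) : Prop :=
  ρ ∈ Set.Icc (0:ℝ) 1 ∧ w ∈ Δ m ∧ supp w ⊆ SR R y ∧ z ∈ Δ n ∧ supp z ⊆ SC C x

/-- `max_{ρ,w,z} T(x,y,x',y',ρ,w,z)` over feasible `(ρ,w,z)`. -/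
def innerMax (R C : Matrix (Fin m) (Fin n) ℝ) (x : Fin m → ℝ) (y : Fin n → ℝ)
    (x' : Fin m → ℝ) (y' : Fin n → ℝ) : ℝ :=
  sSup {t : ℝ | ∃ ρ w z, dualFeasible R C x y ρ w z ∧ t = Tfun R C x y x' y' ρ w z}

/-- `V(x,y) = min_{(x',y') ∈ Δ_m×Δ_n} max_{ρ,w,z} T(x,y,x',y',ρ,w,z)`. -/
def Vval (R C : Matrix (Fin m) (Fin n) ℝ) (x : Fin m → ℝ) (y : Fin n → ℝ) : ℝ :=
  sInf {t : ℝ | ∃ x' ∈ Δ m, ∃ y' ∈ Δ n, t = innerMax R C x y x' y'}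

/-- `min_{(x',y') ∈ Δ_m×Δ_n} T(x,y,x',y',ρ,w,z)`. -/
def innerMin (R C : Matrix (Fin m) (Fin n) ℝ) (x : Fin m → ℝ) (y : Fin n → ℝ)
    (ρ : ℝ) (w : Fin m → ℝ) (z : Fin n → ℝ) : ℝ :=
  sInf {t : ℝ | ∃ x' ∈ Δ m, ∃ y' ∈ Δ n, t = Tfun R C x y x' y' ρ w z}

/-- `(ρ,w,z)` is a dual solution at `(x,y)`. -/
def IsDualSolution (R C : Matrix (Fin m) (Fin n) ℝ) (x : Fin m → ℝ) (y : Fin n → ℝ)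
    (ρ : ℝ) (w : Fin m → ℝ) (z : Fin n → ℝ) : Prop :=
  dualFeasible R C x y ρ w z ∧ Vval R C x y = innerMin R C x y ρ w z

/-- `(x,y)` is an `ε`-approximate Nash equilibrium. -/
def IsEpsNash (R C : Matrix (Fin m) (Fin n) ℝ) (x : Fin m → ℝ) (y : Fin n → ℝ) (ε : ℝ) : Prop :=
  (∀ x' ∈ Δ m, x' ⬝ᵥ R.mulVec y ≤ x ⬝ᵥ R.mulVec y + ε) ∧
  (∀ y' ∈ Δ n, x ⬝ᵥ C.mulVec y' ≤ x ⬝ᵥ C.mulVec y + ε)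

/-- A Nash equilibrium is a `0`-approximate Nash equilibrium. -/
def IsNash (R C : Matrix (Fin m) (Fin n) ℝ) (x : Fin m → ℝ) (y : Fin n → ℝ) : Prop :=
  IsEpsNash R C x y 0

/-- `λ* = (w*−x*)ᵀRz*`. -/
def lamStar (R : Matrix (Fin m) (Fin n) ℝ) (xs ws : Fin m → ℝ) (zs : Fin n → ℝ) : ℝ :=
  (ws - xs) ⬝ᵥ R.mulVec zs

/-- `μ* = w*ᵀC(z*−y*)`. -/
def muStar (C : Matrix (Fin m) (Fin n) ℝ) (ws : Fin m → ℝ) (ys zs : Fin n → ℝ) : ℝ :=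
  ws ⬝ᵥ C.mulVec (zs - ys)

/-- `p* = f_R(x*,z*)/(f_R(x*,z*)+f_C(w*,z*)−f_R(w*,z*))` (`= 0` if the denominator is `0`,
by the real-division-by-zero convention). -/
def pstar (R C : Matrix (Fin m) (Fin n) ℝ) (xs ws : Fin m → ℝ) (zs : Fin n → ℝ) : ℝ :=
  fR R xs zs / (fR R xs zs + fC C ws zs - fR R ws zs)

/-- `q* = f_C(w*,y*)/(f_C(w*,y*)+f_R(w*,z*)−f_C(w*,z*))` (`= 0` if the denominator is `0`). -/
def qstar (R C : Matrix (Fin m) (Fin n) ℝ) (ws : Fin m → ℝ) (ys zs : Fin n → ℝ) : ℝ :=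
  fC C ws ys / (fC C ws ys + fR R ws zs - fC C ws zs)

/-- The adjusted pair `(ũ,ṽ)` of Method 3. -/
def tildeUV (R C : Matrix (Fin m) (Fin n) ℝ) (xs : Fin m → ℝ) (ys : Fin n → ℝ)
    (ws : Fin m → ℝ) (zs : Fin n → ℝ) : (Fin m → ℝ) × (Fin n → ℝ) :=
  if fR R ws zs ≤ fC C ws zs then
    (pstar R C xs ws zs • ws + (1 - pstar R C xs ws zs) • xs, zs)
  else
    (ws, qstar R C ws ys zs • zs + (1 - qstar R C ws ys zs) • ys)


lemma vmax_le {k : ℕ} {u : Fin (k+1) → ℝ} {c : ℝ} (h : ∀ i, u i ≤ c) : vmax u ≤ c :=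
  ciSup_le h

lemma le_vmax {k : ℕ} (u : Fin (k+1) → ℝ) (i : Fin (k+1)) : u i ≤ vmax u :=
  le_ciSup (Set.Finite.bddAbove (Set.finite_range u)) i

lemma exists_suppmax {k : ℕ} (u : Fin (k+1) → ℝ) : ∃ i, i ∈ suppmax u := by
  obtain ⟨i, -, hi⟩ := Finset.exists_max_image Finset.univ u ⟨0, Finset.mem_univ 0⟩
  exact ⟨i, fun j => hi j (Finset.mem_univ j)⟩

lemma vmax_eq {k : ℕ} {u : Fin (k+1) → ℝ} {i : Fin (k+1)} (h : i ∈ suppmax u) :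
    vmax u = u i :=
  le_antisymm (vmax_le h) (le_vmax u i)

lemma dot_nonneg {k : ℕ} {x u : Fin k → ℝ} (hx : ∀ i, 0 ≤ x i) (hu : ∀ i, 0 ≤ u i) :
    0 ≤ x ⬝ᵥ u :=
  Finset.sum_nonneg fun i _ => mul_nonneg (hx i) (hu i)

lemma dot_le_one {k : ℕ} {x u : Fin k → ℝ} (hx : x ∈ Δ k) (hu : ∀ i, u i ≤ 1)
    (hu0 : ∀ i, 0 ≤ u i) : x ⬝ᵥ u ≤ 1 := by
  calc x ⬝ᵥ u ≤ ∑ i, x i := Finset.sum_le_sum fun i _ => by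
        calc x i * u i ≤ x i * 1 := mul_le_mul_of_nonneg_left (hu i) (hx.1 i)
        _ = x i := mul_one _
  _ = 1 := hx.2

lemma dot_le_vmax {k : ℕ} {x : Fin (k+1) → ℝ} (hx : x ∈ Δ (k+1)) (u : Fin (k+1) → ℝ) :
    x ⬝ᵥ u ≤ vmax u := by
  calc x ⬝ᵥ u ≤ ∑ i, x i * vmax u := Finset.sum_le_sum fun i _ =>
        mul_le_mul_of_nonneg_left (le_vmax u i) (hx.1 i)
  _ = vmax u := by rw [← Finset.sum_mul, hx.2, one_mul]

lemma mulVec_mem {m n : ℕ} {R : Matrix (Fin m) (Fin n) ℝ}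
    (hR : ∀ i j, R i j ∈ Set.Icc (0:ℝ) 1) {y : Fin n → ℝ} (hy : y ∈ Δ n) (i : Fin m) :
    R.mulVec y i ∈ Set.Icc (0:ℝ) 1 := by
  simp only [Matrix.mulVec, dotProduct]
  constructor
  · exact Finset.sum_nonneg fun j _ => mul_nonneg (hR i j).1 (hy.1 j)
  · calc ∑ j, R i j * y j ≤ ∑ j, y j := Finset.sum_le_sum fun j _ => by
          calc R i j * y j ≤ 1 * y j := mul_le_mul_of_nonneg_right (hR i j).2 (hy.1 j)
          _ = y j := one_mul _
    _ = 1 := hy.2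

lemma vecMul_mem {m n : ℕ} {C : Matrix (Fin m) (Fin n) ℝ}
    (hC : ∀ i j, C i j ∈ Set.Icc (0:ℝ) 1) {x : Fin m → ℝ} (hx : x ∈ Δ m) (j : Fin n) :
    Matrix.vecMul x C j ∈ Set.Icc (0:ℝ) 1 := by
  simp only [Matrix.vecMul, dotProduct]
  constructor
  · exact Finset.sum_nonneg fun i _ => mul_nonneg (hx.1 i) (hC i j).1
  · calc ∑ i, x i * C i j ≤ ∑ i, x i := Finset.sum_le_sum fun i _ => by
          calc x i * C i j ≤ x i * 1 := mul_le_mul_of_nonneg_left (hC i j).2 (hx.1 i)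
          _ = x i := mul_one _
    _ = 1 := hx.2

lemma bilin_mem {m n : ℕ} {R : Matrix (Fin m) (Fin n) ℝ}
    (hR : ∀ i j, R i j ∈ Set.Icc (0:ℝ) 1) {x : Fin m → ℝ} {y : Fin n → ℝ}
    (hx : x ∈ Δ m) (hy : y ∈ Δ n) : x ⬝ᵥ R.mulVec y ∈ Set.Icc (0:ℝ) 1 := by
  constructor
  · exact dot_nonneg hx.1 fun i => (mulVec_mem hR hy i).1
  · exact dot_le_one hx (fun i => (mulVec_mem hR hy i).2) (fun i => (mulVec_mem hR hy i).1)

lemma single_mem_delta {k : ℕ} (i : Fin k) : (Pi.single i 1 : Fin k → ℝ) ∈ Δ k := by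
  constructor
  · intro j
    by_cases h : j = i
    · subst h; simp
    · simp [Pi.single_apply, h]
  · simp

lemma supp_single {k : ℕ} (i : Fin k) (S : Set (Fin k)) (hi : i ∈ S) :
    supp (Pi.single i 1 : Fin k → ℝ) ⊆ S := by
  intro j hj
  rcases eq_or_ne j i with rfl | h
  · exact hi
  · simp only [supp, Set.mem_setOf_eq, Pi.single_apply, if_neg h, lt_irrefl] at hj


-- ## Auxiliary lemmas for the main theorem

lemma Tfun_bounds {m n : ℕ} {R C : Matrix (Fin (m+1)) (Fin (n+1)) ℝ}
    (hR : ∀ i j, R i j ∈ Set.Icc (0:ℝ) 1) (hC : ∀ i j, C i j ∈ Set.Icc (0:ℝ) 1)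
    {xs x' : Fin (m+1) → ℝ} {ys y' : Fin (n+1) → ℝ}
    (hxs : xs ∈ Δ (m+1)) (hys : ys ∈ Δ (n+1)) (hx' : x' ∈ Δ (m+1)) (hy' : y' ∈ Δ (n+1))
    {ρ : ℝ} {w : Fin (m+1) → ℝ} {z : Fin (n+1) → ℝ}
    (hfeas : dualFeasible R C xs ys ρ w z) :
    Tfun R C xs ys x' y' ρ w z ∈ Set.Icc (-2 : ℝ) 2 := by
  obtain ⟨hρ, hw, -, hz, -⟩ := hfeas
  have h1 := bilin_mem hR hw hy'
  have h2 := bilin_mem hR hxs hy'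
  have h3 := bilin_mem hR hx' hys
  have h4 := bilin_mem hR hxs hys
  have h5 := bilin_mem hC hx' hz
  have h6 := bilin_mem hC hxs hy'
  have h7 := bilin_mem hC hx' hys
  have h8 := bilin_mem hC hxs hys
  obtain ⟨hρ0, hρ1⟩ := hρ
  unfold Tfun
  constructor <;> nlinarith [h1.1, h1.2, h2.1, h2.2, h3.1, h3.2, h4.1, h4.2,
    h5.1, h5.2, h6.1, h6.2, h7.1, h7.2, h8.1, h8.2]

lemma fNE_nonneg {m n : ℕ} (R C : Matrix (Fin (m+1)) (Fin (n+1)) ℝ)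
    {xs : Fin (m+1) → ℝ} {ys : Fin (n+1) → ℝ} (hxs : xs ∈ Δ (m+1)) :
    0 ≤ fNE R C xs ys :=
  le_max_of_le_left (by simpa [fR] using sub_nonneg.2 (dot_le_vmax hxs (R.mulVec ys)))

set_option maxHeartbeats 1000000 in
/-- Key consequence of stationarity: `f(x,y) ≤ innerMax(x,y,x',y')`. -/
lemma f_le_innerMax {m n : ℕ} {R C : Matrix (Fin (m+1)) (Fin (n+1)) ℝ}
    (hR : ∀ i j, R i j ∈ Set.Icc (0:ℝ) 1) (hC : ∀ i j, C i j ∈ Set.Icc (0:ℝ) 1)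
    {xs : Fin (m+1) → ℝ} {ys : Fin (n+1) → ℝ}
    (hxs : xs ∈ Δ (m+1)) (hys : ys ∈ Δ (n+1))
    (hstat : IsStationary R C xs ys)
    {x' : Fin (m+1) → ℝ} {y' : Fin (n+1) → ℝ} (hx' : x' ∈ Δ (m+1)) (hy' : y' ∈ Δ (n+1)) :
    fNE R C xs ys ≤ innerMax R C xs ys x' y' := by
  classical
  obtain ⟨d, hd, hd0⟩ := hstat x' hx' y' hy'
  set f := fNE R C xs ys with hf
  set u := R.mulVec ys with hu
  set a := R.mulVec (y' - ys) with ha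
  set v := Matrix.vecMul xs C with hv
  set b := Matrix.vecMul (x' - xs) C with hb
  set p := C.mulVec ys with hp
  set q := C.mulVec (y' - ys) with hq
  -- entrywise bounds
  have hai : ∀ i, -1 ≤ a i ∧ a i ≤ 1 := by
    intro i
    have h1 := mulVec_mem hR hy' i
    have h2 := mulVec_mem hR hys i
    have : a i = R.mulVec y' i - R.mulVec ys i := by
      rw [ha, Matrix.mulVec_sub]; rfl
    rw [this]; constructor <;> [linarith [h1.1, h2.2]; linarith [h1.2, h2.1]]
  have hbj : ∀ j, -1 ≤ b j ∧ b j ≤ 1 := by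
    intro j
    have h1 := vecMul_mem hC hx' j
    have h2 := vecMul_mem hC hxs j
    have : b j = Matrix.vecMul x' C j - Matrix.vecMul xs C j := by
      rw [hb, Matrix.sub_vecMul]; rfl
    rw [this]; constructor <;> [linarith [h1.1, h2.2]; linarith [h1.2, h2.1]]
  -- argmax choices
  obtain ⟨istar, histar, hista_max⟩ :
      ∃ i ∈ suppmax u, ∀ i' ∈ suppmax u, a i' ≤ a i := by
    have hne : (Finset.univ.filter (· ∈ suppmax u)).Nonempty := by
      obtain ⟨i, hi⟩ := exists_suppmax u
      exact ⟨i, by simp [hi]⟩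
    obtain ⟨i, hi, hmax⟩ := Finset.exists_max_image _ a hne
    simp only [Finset.mem_filter, Finset.mem_univ, true_and] at hi
    exact ⟨i, hi, fun i' hi' => hmax i' (by simp [hi'])⟩
  obtain ⟨jstar, hjstar, hjsta_max⟩ :
      ∃ j ∈ suppmax v, ∀ j' ∈ suppmax v, b j' ≤ b j := by
    have hne : (Finset.univ.filter (· ∈ suppmax v)).Nonempty := by
      obtain ⟨j, hj⟩ := exists_suppmax v
      exact ⟨j, by simp [hj]⟩
    obtain ⟨j, hj, hmax⟩ := Finset.exists_max_image _ b hne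
    simp only [Finset.mem_filter, Finset.mem_univ, true_and] at hj
    exact ⟨j, hj, fun j' hj' => hmax j' (by simp [hj'])⟩
  set w1 : Fin (m+1) → ℝ := Pi.single istar 1 with hw1
  set z1 : Fin (n+1) → ℝ := Pi.single jstar 1 with hz1
  have hfeas1 : dualFeasible R C xs ys 1 w1 z1 :=
    ⟨⟨zero_le_one, le_refl 1⟩, single_mem_delta istar, supp_single istar _ histar,
      single_mem_delta jstar, supp_single jstar _ hjstar⟩
  have hfeas0 : dualFeasible R C xs ys 0 w1 z1 :=
    ⟨⟨le_refl 0, zero_le_one⟩, single_mem_delta istar, supp_single istar _ histar,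
      single_mem_delta jstar, supp_single jstar _ hjstar⟩
  set T1 := Tfun R C xs ys x' y' 1 w1 z1 with hT1def
  set T0 := Tfun R C xs ys x' y' 0 w1 z1 with hT0def
  set M := max T1 T0 with hM
  -- the inner max set and its bound
  have hbdd : BddAbove {t : ℝ | ∃ ρ w z, dualFeasible R C xs ys ρ w z ∧
      t = Tfun R C xs ys x' y' ρ w z} := by
    refine ⟨2, ?_⟩
    rintro t ⟨ρ, w, z, hfeas, rfl⟩
    exact (Tfun_bounds hR hC hxs hys hx' hy' hfeas).2
  have hT1mem : T1 ≤ innerMax R C xs ys x' y' :=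
    le_csSup hbdd ⟨1, w1, z1, hfeas1, rfl⟩
  have hT0mem : T0 ≤ innerMax R C xs ys x' y' :=
    le_csSup hbdd ⟨0, w1, z1, hfeas0, rfl⟩
  have hMle : M ≤ innerMax R C xs ys x' y' := max_le hT1mem hT0mem
  -- it suffices to show d ≤ M - f
  suffices hdM : d ≤ M - f by
    have : f ≤ M := by linarith
    linarith [hMle]
  -- the deltas
  have hSu : istar ∈ suppmax u := histar
  have hSv : jstar ∈ suppmax v := hjstar
  set δR : ℝ := Finset.univ.inf' Finset.univ_nonempty
    (fun i => if i ∈ suppmax u then 1 else (u istar - u i)/2) with hδR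
  set δC : ℝ := Finset.univ.inf' Finset.univ_nonempty
    (fun j => if j ∈ suppmax v then 1 else (v jstar - v j)/2) with hδC
  have hδRpos : 0 < δR := by
    rw [hδR, Finset.lt_inf'_iff]
    intro i _
    by_cases hi : i ∈ suppmax u
    · simp [hi]
    · simp only [hi, if_false]
      have : u i < u istar := by
        by_contra hcon
        push_neg at hcon
        exact hi (fun j => le_trans (hSu j) hcon)
      linarith
  have hδCpos : 0 < δC := by
    rw [hδC, Finset.lt_inf'_iff]
    intro j _
    by_cases hj : j ∈ suppmax v
    · simp [hj]
    · simp only [hj, if_false]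
      have : v j < v jstar := by
        by_contra hcon
        push_neg at hcon
        exact hj (fun j' => le_trans (hSv j') hcon)
      linarith
  set δ : ℝ := min 1 (min δR δC) with hδ
  have hδpos : 0 < δ := lt_min one_pos (lt_min hδRpos hδCpos)
  -- pointwise bound
  set g : ℝ → ℝ := fun θ => fNE R C (xs + θ • (x' - xs)) (ys + θ • (y' - ys)) with hg
  have hg0 : g 0 = f := by simp [hg, hf]
  have key : ∀ θ : ℝ, θ ∈ Set.Ioc 0 δ → (g θ - g 0)/θ ≤ (M - f) + 2*θ := by
    intro θ ⟨hθpos, hθδ⟩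
    have hθ1 : θ ≤ 1 := le_trans hθδ (min_le_left _ _)
    have hθR : θ ≤ δR := le_trans hθδ (le_trans (min_le_right _ _) (min_le_left _ _))
    have hθC : θ ≤ δC := le_trans hθδ (le_trans (min_le_right _ _) (min_le_right _ _))
    rw [hg0, div_le_iff₀ hθpos]
    have hmvR : R.mulVec (ys + θ • (y' - ys)) = u + θ • a := by
      rw [Matrix.mulVec_add, Matrix.mulVec_smul, hu, ha]
    have hmvC : C.mulVec (ys + θ • (y' - ys)) = p + θ • q := by
      rw [Matrix.mulVec_add, Matrix.mulVec_smul, hp, hq]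
    have hvmC : Matrix.vecMul (xs + θ • (x' - xs)) C = v + θ • b := by
      rw [Matrix.add_vecMul, Matrix.smul_vecMul, hv, hb]
    -- vmax bounds
    have hvmaxR : vmax (R.mulVec (ys + θ • (y' - ys))) ≤ u istar + θ * a istar := by
      rw [hmvR]
      apply vmax_le
      intro i
      simp only [Pi.add_apply, Pi.smul_apply, smul_eq_mul]
      by_cases hi : i ∈ suppmax u
      · have h1 : u i ≤ u istar := hSu i
        have h2 : a i ≤ a istar := hista_max i hi
        nlinarith
      · have hgap : θ ≤ (u istar - u i)/2 := by
          have := Finset.inf'_le (b := i)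
            (fun i => if i ∈ suppmax u then 1 else (u istar - u i)/2) (Finset.mem_univ i)
          rw [if_neg hi] at this
          exact le_trans hθR this
        have h1 := (hai i).2
        have h2 := (hai istar).1
        nlinarith
    have hvmaxC : vmax (Matrix.vecMul (xs + θ • (x' - xs)) C) ≤ v jstar + θ * b jstar := by
      rw [hvmC]
      apply vmax_le
      intro j
      simp only [Pi.add_apply, Pi.smul_apply, smul_eq_mul]
      by_cases hj : j ∈ suppmax v
      · have h1 : v j ≤ v jstar := hSv j
        have h2 : b j ≤ b jstar := hjsta_max j hj
        nlinarith
      · have hgap : θ ≤ (v jstar - v j)/2 := by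
          have := Finset.inf'_le (b := j)
            (fun j => if j ∈ suppmax v then 1 else (v jstar - v j)/2) (Finset.mem_univ j)
          rw [if_neg hj] at this
          exact le_trans hθC this
        have h1 := (hbj j).2
        have h2 := (hbj jstar).1
        nlinarith
    -- dot product expansions
    have hdotR : (xs + θ • (x' - xs)) ⬝ᵥ R.mulVec (ys + θ • (y' - ys))
        = xs ⬝ᵥ u + θ * ((x' - xs) ⬝ᵥ u + xs ⬝ᵥ a) + θ^2 * ((x' - xs) ⬝ᵥ a) := by
      rw [hmvR]
      simp only [dotProduct_add, add_dotProduct, dotProduct_smul,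
        smul_dotProduct, smul_eq_mul]
      ring
    have hdotC : (xs + θ • (x' - xs)) ⬝ᵥ C.mulVec (ys + θ • (y' - ys))
        = xs ⬝ᵥ p + θ * ((x' - xs) ⬝ᵥ p + xs ⬝ᵥ q) + θ^2 * ((x' - xs) ⬝ᵥ q) := by
      rw [hmvC]
      simp only [dotProduct_add, add_dotProduct, dotProduct_smul,
        smul_dotProduct, smul_eq_mul]
      ring
    -- quadratic coefficient bounds
    have hquadR : -2 ≤ (x' - xs) ⬝ᵥ a := by
      have : (x' - xs) ⬝ᵥ a = x' ⬝ᵥ R.mulVec y' - x' ⬝ᵥ u - xs ⬝ᵥ R.mulVec y' + xs ⬝ᵥ u := by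
        rw [ha, hu, Matrix.mulVec_sub, sub_dotProduct, dotProduct_sub,
          dotProduct_sub]
        ring
      rw [this]
      have h1 := bilin_mem hR hx' hy'
      have h2 := bilin_mem hR hx' hys
      have h3 := bilin_mem hR hxs hy'
      have h4 := bilin_mem hR hxs hys
      rw [hu]
      linarith [h1.1, h2.2, h3.2, h4.1]
    have hquadC : -2 ≤ (x' - xs) ⬝ᵥ q := by
      have : (x' - xs) ⬝ᵥ q = x' ⬝ᵥ C.mulVec y' - x' ⬝ᵥ p - xs ⬝ᵥ C.mulVec y' + xs ⬝ᵥ p := by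
        rw [hq, hp, Matrix.mulVec_sub, sub_dotProduct, dotProduct_sub,
          dotProduct_sub]
        ring
      rw [this]
      have h1 := bilin_mem hC hx' hy'
      have h2 := bilin_mem hC hx' hys
      have h3 := bilin_mem hC hxs hy'
      have h4 := bilin_mem hC hxs hys
      rw [hp]
      linarith [h1.1, h2.2, h3.2, h4.1]
    -- identities for T1, T0
    have hfRval : fR R xs ys = u istar - xs ⬝ᵥ u := by
      rw [fR, vmax_eq hSu, hu]
    have hfCval : fC C xs ys = v jstar - xs ⬝ᵥ p := by
      rw [fC, vmax_eq hSv, hv, hp]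
    have hT1id : T1 = fR R xs ys + (a istar - ((x' - xs) ⬝ᵥ u + xs ⬝ᵥ a)) := by
      rw [hT1def, Tfun, hfRval]
      have e1 : w1 ⬝ᵥ R.mulVec y' = R.mulVec y' istar := by
        rw [hw1, single_dotProduct, one_mul]
      have e2 : a istar = R.mulVec y' istar - u istar := by
        rw [ha, hu, Matrix.mulVec_sub]; rfl
      have e3 : (x' - xs) ⬝ᵥ u = x' ⬝ᵥ u - xs ⬝ᵥ u := by
        rw [sub_dotProduct]
      have e4 : xs ⬝ᵥ a = xs ⬝ᵥ R.mulVec y' - xs ⬝ᵥ u := by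
        rw [ha, hu, Matrix.mulVec_sub, dotProduct_sub]
      rw [e1, e2, e3, e4, hu]
      ring
    have hT0id : T0 = fC C xs ys + (b jstar - ((x' - xs) ⬝ᵥ p + xs ⬝ᵥ q)) := by
      rw [hT0def, Tfun, hfCval]
      have e1 : x' ⬝ᵥ C.mulVec z1 = Matrix.vecMul x' C jstar := by
        rw [hz1, Matrix.mulVec_single]
        simp only [dotProduct, Matrix.vecMul, mul_one, MulOpposite.op_one, one_smul, Matrix.col_apply]
      have e2 : b jstar = Matrix.vecMul x' C jstar - v jstar := by
        rw [hb, hv, Matrix.sub_vecMul]; rfl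
      have e3 : (x' - xs) ⬝ᵥ p = x' ⬝ᵥ p - xs ⬝ᵥ p := by
        rw [sub_dotProduct]
      have e4 : xs ⬝ᵥ q = xs ⬝ᵥ C.mulVec y' - xs ⬝ᵥ p := by
        rw [hq, hp, Matrix.mulVec_sub, dotProduct_sub]
      rw [e1, e2, e3, e4, hp]
      ring
    -- now bound g θ
    have hfRle : fR R (xs + θ • (x' - xs)) (ys + θ • (y' - ys))
        ≤ fR R xs ys + θ * (T1 - fR R xs ys) + 2*θ^2 := by
      rw [fR, hfRval]
      have := hvmaxR
      rw [hdotR]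
      have h5 : T1 - fR R xs ys = a istar - ((x' - xs) ⬝ᵥ u + xs ⬝ᵥ a) := by
        rw [hT1id]; ring
      rw [hfRval] at h5
      have hsplit : θ * (T1 - (u istar - xs ⬝ᵥ u))
          = θ * a istar - θ * ((x' - xs) ⬝ᵥ u + xs ⬝ᵥ a) := by rw [h5]; ring
      have hq2 : 0 ≤ θ^2 * ((x' - xs) ⬝ᵥ a) + 2*θ^2 := by nlinarith [sq_nonneg θ, hquadR]
      linarith [hvmaxR, hsplit, hq2]
    have hfCle : fC C (xs + θ • (x' - xs)) (ys + θ • (y' - ys))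
        ≤ fC C xs ys + θ * (T0 - fC C xs ys) + 2*θ^2 := by
      rw [fC, hfCval]
      have := hvmaxC
      rw [hdotC]
      have h5 : T0 - fC C xs ys = b jstar - ((x' - xs) ⬝ᵥ p + xs ⬝ᵥ q) := by
        rw [hT0id]; ring
      rw [hfCval] at h5
      have hsplit : θ * (T0 - (v jstar - xs ⬝ᵥ p))
          = θ * b jstar - θ * ((x' - xs) ⬝ᵥ p + xs ⬝ᵥ q) := by rw [h5]; ring
      have hq2 : 0 ≤ θ^2 * ((x' - xs) ⬝ᵥ q) + 2*θ^2 := by nlinarith [sq_nonneg θ, hquadC]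
      linarith [hvmaxC, hsplit, hq2]
    have hfRf : fR R xs ys ≤ f := le_max_left _ _
    have hfCf : fC C xs ys ≤ f := le_max_right _ _
    have hT1M : T1 ≤ M := le_max_left _ _
    have hT0M : T0 ≤ M := le_max_right _ _
    have hgθ : g θ ≤ f + θ * (M - f) + 2*θ^2 := by
      rw [hg]
      apply max_le
      · have h1 : fR R xs ys + θ * (T1 - fR R xs ys) + 2*θ^2
            ≤ f + θ * (M - f) + 2*θ^2 := by nlinarith [hfRf, hT1M, hθ1, hθpos.le]
        linarith [hfRle]
      · have h1 : fC C xs ys + θ * (T0 - fC C xs ys) + 2*θ^2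
            ≤ f + θ * (M - f) + 2*θ^2 := by nlinarith [hfCf, hT0M, hθ1, hθpos.le]
        linarith [hfCle]
    nlinarith [hgθ]
  -- limit argument
  have hev : ∀ᶠ θ in nhdsWithin (0:ℝ) (Set.Ioi 0),
      (g θ - g 0)/θ ≤ (M - f) + 2*θ := by
    filter_upwards [Ioc_mem_nhdsGT hδpos] with θ hθ
    exact key θ hθ
  have hlim2 : Tendsto (fun θ : ℝ => (M - f) + 2*θ) (nhdsWithin (0:ℝ) (Set.Ioi 0))
      (nhds (M - f)) := by
    have : Tendsto (fun θ : ℝ => (M - f) + 2*θ) (nhds 0) (nhds ((M - f) + 2*0)) := by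
      exact (continuous_const.add (continuous_const.mul continuous_id)).tendsto 0
    simpa using this.mono_left nhdsWithin_le_nhds
  exact le_of_tendsto_of_tendsto hd hlim2 hev

/-- bounds on `λ*, μ*` when `ρ* ∈ (0,1)`, and `(x*,y*)` is Nash
when `ρ* ∈ {0,1}`. -/
theorem stmt3 {m n : ℕ} (R C : Matrix (Fin (m+1)) (Fin (n+1)) ℝ)
    (hR : ∀ i j, R i j ∈ Set.Icc (0:ℝ) 1) (hC : ∀ i j, C i j ∈ Set.Icc (0:ℝ) 1)
    (xs : Fin (m+1) → ℝ) (ys : Fin (n+1) → ℝ) (ρs : ℝ) (ws : Fin (m+1) → ℝ) (zs : Fin (n+1) → ℝ)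
    (hxs : xs ∈ Δ (m+1)) (hys : ys ∈ Δ (n+1))
    (hstat : IsStationary R C xs ys)
    (hdual : IsDualSolution R C xs ys ρs ws zs) :
    (ρs ∈ Set.Ioo (0:ℝ) 1 →
      lamStar R xs ws zs ∈ Set.Icc (0:ℝ) 1 ∧ muStar C ws ys zs ∈ Set.Icc (0:ℝ) 1) ∧
    ((ρs = 0 ∨ ρs = 1) → IsNash R C xs ys) := by
  obtain ⟨hfeas, hVeq⟩ := hdual
  obtain ⟨hρ, hws, hwsupp, hzs, hzsupp⟩ := hfeas
  have hVge : fNE R C xs ys ≤ Vval R C xs ys := by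
    unfold Vval
    have hne : Set.Nonempty {t : ℝ | ∃ x' ∈ Δ (m+1), ∃ y' ∈ Δ (n+1),
        t = innerMax R C xs ys x' y'} := ⟨_, xs, hxs, ys, hys, rfl⟩
    refine le_csInf hne ?_
    rintro t ⟨x', hx', y', hy', rfl⟩
    exact f_le_innerMax hR hC hxs hys hstat hx' hy'
  have hbddb : BddBelow {t : ℝ | ∃ x' ∈ Δ (m+1), ∃ y' ∈ Δ (n+1),
      t = Tfun R C xs ys x' y' ρs ws zs} := by
    refine ⟨-2, ?_⟩
    rintro t ⟨x', hx', y', hy', rfl⟩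
    exact (Tfun_bounds hR hC hxs hys hx' hy' ⟨hρ, hws, hwsupp, hzs, hzsupp⟩).1
  have hTge : ∀ x' ∈ Δ (m+1), ∀ y' ∈ Δ (n+1),
      fNE R C xs ys ≤ Tfun R C xs ys x' y' ρs ws zs := by
    intro x' hx' y' hy'
    have h1 : innerMin R C xs ys ρs ws zs ≤ Tfun R C xs ys x' y' ρs ws zs := by
      unfold innerMin
      exact csInf_le hbddb ⟨x', hx', y', hy', rfl⟩
    calc fNE R C xs ys ≤ Vval R C xs ys := hVge
    _ = innerMin R C xs ys ρs ws zs := hVeq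
    _ ≤ _ := h1
  have hf0 : 0 ≤ fNE R C xs ys := fNE_nonneg R C hxs
  have hTlam : Tfun R C xs ys xs zs ρs ws zs = ρs * lamStar R xs ws zs := by
    unfold Tfun lamStar
    rw [sub_dotProduct]
    ring
  have hTmu : Tfun R C xs ys ws ys ρs ws zs = (1 - ρs) * muStar C ws ys zs := by
    unfold Tfun muStar
    rw [Matrix.mulVec_sub, dotProduct_sub]
    ring
  have hlam1 := hTge xs hxs zs hzs
  have hmu1 := hTge ws hws ys hys
  rw [hTlam] at hlam1
  rw [hTmu] at hmu1
  constructor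
  · rintro ⟨hρpos, hρlt⟩
    have hwRz := bilin_mem hR hws hzs
    have hxRz := bilin_mem hR hxs hzs
    have hwCz := bilin_mem hC hws hzs
    have hwCy := bilin_mem hC hws hys
    have hlamval : lamStar R xs ws zs = ws ⬝ᵥ R.mulVec zs - xs ⬝ᵥ R.mulVec zs := by
      unfold lamStar; rw [sub_dotProduct]
    have hmuval : muStar C ws ys zs = ws ⬝ᵥ C.mulVec zs - ws ⬝ᵥ C.mulVec ys := by
      unfold muStar; rw [Matrix.mulVec_sub, dotProduct_sub]
    constructor
    · constructor
      · by_contra h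
        push_neg at h
        nlinarith
      · rw [hlamval]; linarith [hwRz.2, hxRz.1]
    · constructor
      · by_contra h
        push_neg at h
        nlinarith
      · rw [hmuval]; linarith [hwCz.2, hwCy.1]
  · intro hcase
    have hfle : fNE R C xs ys ≤ 0 := by
      rcases hcase with h0 | h1
      · rw [h0] at hlam1; linarith
      · rw [h1] at hmu1; linarith
    have hfR0 : fR R xs ys ≤ 0 := le_trans (le_max_left _ _) hfle
    have hfC0 : fC C xs ys ≤ 0 := le_trans (le_max_right _ _) hfle
    unfold fR at hfR0
    unfold fC at hfC0
    constructor
    · intro x' hx'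
      have h2 := dot_le_vmax hx' (R.mulVec ys)
      linarith
    · intro y' hy'
      have h2 : xs ⬝ᵥ C.mulVec y' ≤ vmax (Matrix.vecMul xs C) := by
        rw [Matrix.dotProduct_mulVec, dotProduct_comm]
        exact dot_le_vmax hy' _
      linarith

end TS
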